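/- arXiv:2310.08979 — 10 statements merged into one kernel-verified Lean document; each statement's English description precedes it below -/
import Mathlib

section
/- Let A be an affine K-module (an abelian heap with a ternary scalar action α ▷_a b satisfying: α ▷_a - and - ▷_a b are heap homomorphisms, (αβ) ▷_a b = α ▷_a (β ▷_a b), the base-change law α ▷_a b = ⟨α ▷_c b, α ▷_c a, a⟩, and 0 ▷_a b = a, 1 ▷_a b = b). Then for all a,b,c,d ∈ A and α ∈ K, α ▷_{⟨a,b,c⟩} d = ⟨α ▷_a d, α ▷_b d, α ▷_c d⟩, i.e., the action is a heap homomorphism in the base argument. -/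
universe u v

class AbHeap (H : Type v) where
  hp : H → H → H → H
  hassoc : ∀ a b c d e : H, hp (hp a b c) d e = hp a b (hp c d e)
  hidr : ∀ a b : H, hp a b b = a
  hidl : ∀ a b : H, hp b b a = a
  hcomm : ∀ a b c : H, hp a b c = hp c b a

open AbHeap

class AffMod (K : Type u) [CommRing K] (A : Type v) extends AbHeap A where
  act : K → A → A → A
  act_hp : ∀ (α : K) (a b c d : A),
    act α a (hp b c d) = hp (act α a b) (act α a c) (act α a d)
  act_scalar_hp : ∀ (α β γ : K) (a b : A),
    act (α - β + γ) a b = hp (act α a b) (act β a b) (act γ a b)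
  act_mul : ∀ (α β : K) (a b : A), act (α * β) a b = act α a (act β a b)
  act_base : ∀ (α : K) (a b c : A), act α a b = hp (act α c b) (act α c a) a
  act_zero : ∀ a b : A, act (0 : K) a b = a
  act_one : ∀ a b : A, act (1 : K) a b = b

open AffMod

/-- A homomorphism of affine `K`-modules: a heap homomorphism preserving the action. -/
def IsAffHom (K : Type u) [CommRing K] {A : Type v} {B : Type v} [AffMod K A] [AffMod K B]
    (f : A → B) : Prop :=
  (∀ a b c : A, f (hp a b c) = hp (f a) (f b) (f c)) ∧
  (∀ (α : K) (a b : A), f (act α a b) = act α (f a) (f b))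

/-- A (left) Lie bracket on an affine `K`-module: bi-affine, heap-antisymmetric,
satisfying the heap Jacobi identity. -/
def IsLieBracket (K : Type u) [CommRing K] {A : Type v} [AffMod K A] (br : A → A → A) : Prop :=
  (∀ b : A, IsAffHom K (fun a => br a b)) ∧
  (∀ a : A, IsAffHom K (br a)) ∧
  (∀ a b : A, hp (br a b) (br a a) (br b a) = br b b) ∧
  (∀ a b c : A,
    hp (hp (br a (br b c)) (br a a) (br b (br c a))) (br b b) (br c (br a b)) = br c c)


/-- Any abelian heap with a chosen base point `e` is an additive commutative group. -/
def heapAddGroup {H : Type v} [AbHeap H] (e : H) : AddCommGroup H :=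
  letI : Zero H := ⟨e⟩
  letI : Add H := ⟨fun x y => hp x e y⟩
  letI : Neg H := ⟨fun x => hp e x e⟩
  { add_assoc := fun x y z => hassoc x e y e z
    zero_add := fun x => hidl x e
    add_zero := fun x => hidr x e
    neg_add_cancel := fun x => by
      show hp (hp e x e) e x = e
      rw [hassoc, hidl, hidr]
    add_comm := fun x y => hcomm x e y
    nsmul := nsmulRec
    zsmul := zsmulRec }

theorem hp_as_group {H : Type v} [AbHeap H] (e x y z : H) :
    hp (hp x e (hp e y e)) e z = hp x y z := by
  rw [hassoc, hassoc, hidl]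
  calc hp x e (hp e y z) = hp (hp x e e) y z := (hassoc x e e y z).symm
    _ = hp x y z := by rw [hidr]

/-- In an affine `K`-module the action is a heap homomorphism in the base argument. -/
theorem stmt1 {K : Type u} [CommRing K] {A : Type v} [AffMod K A]
    (α : K) (a b c d : A) :
    act α (hp a b c) d = hp (act α a d) (act α b d) (act α c d) := by
  have haa : act α a a = a := by
    have h1 := act_mul α (0 : K) a a
    rw [mul_zero, act_zero] at h1
    exact h1.symm
  rw [act_base α (hp a b c) d a, act_hp, haa, act_base α b d a, act_base α c d a]
  letI : AddCommGroup A := heapAddGroup a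
  have h : ∀ x y z : A, hp x y z = x - y + z := by
    intro x y z
    rw [sub_eq_add_neg]
    exact (hp_as_group a x y z).symm
  simp only [h]
  abel
end

section
/- Let A be an affine K-module and o, u ∈ A. The translation map τ_o^u : A → A, a ↦ ⟨a, o, u⟩, is an isomorphism of K-modules from A_o to A_u, where A_o is the K-module with addition a + b = ⟨a,o,b⟩, zero o, and scalar multiplication α·a = α ▷_o a (similarly for A_u). In particular, τ_o^u(α ▷_o a) = α ▷_u τ_o^u(a). -/
universe u v

open AbHeap

open AffMod

lemma act_self {K : Type u} [CommRing K] {A : Type v} [AffMod K A] (α : K) (a : A) :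
    act α a a = a := by
  have h := act_base α a a a
  rw [hidl] at h
  exact h

/-- The translation `τ_o^u : a ↦ ⟨a,o,u⟩` is an isomorphism of `K`-modules `A_o ≅ A_u`. -/
theorem stmt4 {K : Type u} [CommRing K] {A : Type v} [AffMod K A] (o u : A) :
    Function.Bijective (fun a : A => hp a o u) ∧
    hp o o u = u ∧
    (∀ a b : A, hp (hp a o b) o u = hp (hp a o u) u (hp b o u)) ∧
    (∀ (α : K) (a : A), hp (act α o a) o u = act α u (hp a o u)) := by
  refine ⟨?_, hidl u o, ?_, ?_⟩
  · have hinv : Function.LeftInverse (fun a : A => hp a u o) (fun a : A => hp a o u) := by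
      intro a; simp only [hassoc, hidl, hidr]
    have hinv2 : Function.RightInverse (fun a : A => hp a u o) (fun a : A => hp a o u) := by
      intro a; simp only [hassoc, hidl, hidr]
    exact ⟨hinv.injective, hinv2.surjective⟩
  · intro a b
    rw [hassoc, hassoc, hidl]
  · intro α a
    rw [act_base α o a u, act_hp, act_self, hassoc, hidl]
end

section
/- Let A be an affine K-module and ζ ∈ K. Then [a,b] := ζ ▷_a b is a left Lie bracket on A: it is bi-affine, antisymmetric in the heap sense (⟨[a,b],[a,a],[b,a]⟩ = [b,b]), and satisfies the affine Jacobi identity ⟨[a,[b,c]],[a,a],[b,[c,a]],[b,b],[c,[a,b]]⟩ = [c,c]. -/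
universe u v

open AbHeap

open AffMod

theorem aux_lie {K : Type u} [CommRing K] {A : Type v} [AffMod K A] (ζ : K) (e : A) :
    IsLieBracket K (fun (a b : A) => act ζ a b) := by
  letI : Add A := ⟨fun x y => hp x e y⟩
  letI : Zero A := ⟨e⟩
  letI : Neg A := ⟨fun x => hp e x e⟩
  letI : AddCommGroup A :=
  { add := (· + ·)
    zero := 0
    neg := Neg.neg
    add_assoc := fun x y z => hassoc x e y e z
    zero_add := fun x => hidl x e
    add_zero := fun x => hidr x e
    nsmul := nsmulRec
    zsmul := zsmulRec
    neg_add_cancel := fun x => by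
      show hp (hp e x e) e x = e
      rw [hassoc, hidl]
      exact hidr e x
    add_comm := fun x y => hcomm x e y }
  have hhp : ∀ x y z : A, hp x y z = x + -y + z := by
    intro x y z
    show hp x y z = hp (hp x e (hp e y e)) e z
    rw [← hassoc x e e y e, hidr, hassoc, hidl]
  have hee : ∀ α : K, act α e e = e := by
    intro α
    rw [act_base α e e e]
    exact hidl e (act α e e)
  have fadd2 : ∀ (α : K) (x y : A), act α e (x + y) = act α e x + act α e y := by
    intro α x y
    show act α e (hp x e y) = hp (act α e x) e (act α e y)
    rw [act_hp, hee]
  have fneg : ∀ (α : K) (x : A), act α e (-x) = -(act α e x) := by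
    intro α x
    show act α e (hp e x e) = hp e (act α e x) e
    rw [act_hp, hee]
  have fmul : ∀ (α β : K) (x : A), act α e (act β e x) = act (α * β) e x := by
    intro α β x
    exact (act_mul α β e x).symm
  have hact : ∀ (α : K) (a b : A), act α a b = act α e b + -(act α e a) + a := by
    intro α a b
    rw [act_base α a b e, hhp]
  refine ⟨?_, ?_, ?_, ?_⟩
  · intro b
    refine ⟨?_, ?_⟩
    · intro x y z
      show act ζ (hp x y z) b = hp (act ζ x b) (act ζ y b) (act ζ z b)
      rw [hact ζ (hp x y z) b, hact ζ x b, hact ζ y b, hact ζ z b]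
      simp only [hhp, fadd2, fneg, fmul, hee]
      abel
    · intro α x y
      show act ζ (act α x y) b = act α (act ζ x b) (act ζ y b)
      rw [hact ζ (act α x y) b, hact α x y, hact α (act ζ x b) (act ζ y b),
        hact ζ x b, hact ζ y b]
      simp only [hhp, fadd2, fneg, fmul, hee]
      rw [mul_comm ζ α]
      abel
  · intro a
    refine ⟨?_, ?_⟩
    · intro x y z
      exact act_hp ζ a x y z
    · intro α x y
      show act ζ a (act α x y) = act α (act ζ a x) (act ζ a y)
      rw [hact ζ a (act α x y), hact α x y, hact α (act ζ a x) (act ζ a y),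
        hact ζ a x, hact ζ a y]
      simp only [hhp, fadd2, fneg, fmul, hee]
      rw [mul_comm ζ α]
      abel
  · intro a b
    show hp (act ζ a b) (act ζ a a) (act ζ b a) = act ζ b b
    rw [hact ζ a b, hact ζ a a, hact ζ b a, hact ζ b b, hhp]
    abel
  · intro a b c
    show hp (hp (act ζ a (act ζ b c)) (act ζ a a) (act ζ b (act ζ c a)))
        (act ζ b b) (act ζ c (act ζ a b)) = act ζ c c
    rw [hact ζ a (act ζ b c), hact ζ b (act ζ c a), hact ζ c (act ζ a b),
      hact ζ a a, hact ζ b b, hact ζ c c, hact ζ b c, hact ζ c a, hact ζ a b]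
    simp only [hhp, fadd2, fneg, fmul, hee]
    abel

/-- For any `ζ ∈ K`, the bracket `[a,b] = ζ ▷_a b` is a left Lie bracket. -/
theorem stmt7 {K : Type u} [CommRing K] {A : Type v} [AffMod K A] (ζ : K) :
    IsLieBracket K (fun (a b : A) => act ζ a b) := by
  exact ⟨fun b => (aux_lie ζ b).1 b, fun a => (aux_lie ζ a).2.1 a,
    fun a b => (aux_lie ζ a).2.2.1 a b, fun a b c => (aux_lie ζ a).2.2.2 a b c⟩
end

section
/- Let A be an affine space over a field K of dimension at least 1, and for ζ ∈ K let [a,b]_ζ := ζ ▷_a b be the corresponding Lie affgebra structure. Then the Lie affgebras (A, [-,-]_{ζ₁}) and (A, [-,-]_{ζ₂}) are isomorphic if and only if ζ₁ = ζ₂. -/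
universe u v

open AbHeap

open AffMod

/-- Over a field, for an affine space of dimension at least one (i.e. with two distinct
points), the Lie affgebras `(A, ζ₁ ▷)` and `(A, ζ₂ ▷)` are isomorphic iff `ζ₁ = ζ₂`. -/
theorem stmt8 {K : Type u} [Field K] {A : Type v} [AffMod K A]
    (hA : ∃ a b : A, a ≠ b) (ζ₁ ζ₂ : K) :
    (∃ f : A → A, Function.Bijective f ∧ IsAffHom K f ∧
      ∀ a b : A, f (act ζ₁ a b) = act ζ₂ (f a) (f b)) ↔ ζ₁ = ζ₂ := by
  constructor
  · rintro ⟨f, hbij, ⟨hhp, hact⟩, hζ⟩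
    -- f (act ζ₁ a b) = act ζ₁ (f a) (f b), so act ζ₁ x y = act ζ₂ x y for all x y
    have key : ∀ x y : A, act ζ₁ x y = act ζ₂ x y := by
      intro x y
      obtain ⟨a, ha⟩ := hbij.2 x
      obtain ⟨b, hb⟩ := hbij.2 y
      have := hζ a b
      rw [hact] at this
      rw [ha, hb] at this
      exact this
    by_contra hne
    -- act (ζ₁ - ζ₂) x y = x for all x y
    have hself : ∀ (α : K) (a : A), act α a a = a := by
      intro α a
      have := act_base α a a a
      rw [hidl] at this
      exact this
    have hzero : ∀ x y : A, act (ζ₁ - ζ₂) x y = x := by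
      intro x y
      have h := act_scalar_hp ζ₁ ζ₂ (0 : K) x y
      rw [key x y, act_zero, hidl] at h
      have : ζ₁ - ζ₂ + 0 = ζ₁ - ζ₂ := by ring
      rw [this] at h
      exact h
    obtain ⟨a, b, hab⟩ := hA
    apply hab
    have hγ : ζ₁ - ζ₂ ≠ 0 := sub_ne_zero.mpr hne
    have h1 : act ((ζ₁ - ζ₂)⁻¹ * (ζ₁ - ζ₂)) a b = b := by
      rw [inv_mul_cancel₀ hγ, act_one]
    rw [act_mul, hzero a b, hself] at h1
    exact h1
  · rintro rfl
    refine ⟨id, Function.bijective_id, ⟨fun _ _ _ => rfl, fun _ _ _ => rfl⟩,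
      fun _ _ => rfl⟩
end

section
/- Let A be an associative K-affgebra (an affine K-module with bi-affine associative multiplication). Then the commutator-type bracket [a,b] := ⟨ab, ba, b⟩ is a left Lie bracket on A: it is bi-affine, satisfies ⟨[a,b],[a,a],[b,a]⟩ = [b,b], and satisfies ⟨[a,[b,c]],[a,a],[b,[c,a]],[b,b],[c,[a,b]]⟩ = [c,c]. -/
universe u v

open AbHeap

open AffMod

/-- The abelian group structure on an abelian heap determined by a choice of neutral
element `e`. -/
def heapGroup {A : Type v} [AbHeap A] (e : A) : AddCommGroup A :=
  letI : Zero A := ⟨e⟩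
  letI : Add A := ⟨fun a b => hp a e b⟩
  letI : Neg A := ⟨fun a => hp e a e⟩
  { add := (· + ·)
    zero := 0
    neg := Neg.neg
    nsmul := nsmulRec
    zsmul := zsmulRec
    add_assoc := fun a b c => hassoc a e b e c
    zero_add := fun a => hidl a e
    add_zero := fun a => hidr a e
    neg_add_cancel := fun a => by
      show hp (hp e a e) e a = e
      rw [hassoc, hidl, hcomm, hidl]
    add_comm := fun a b => hcomm a e b }

theorem hp_eq_group {A : Type v} [AbHeap A] (e : A) (a b c : A) :
    hp a b c = (letI := heapGroup e; a - b + c) := by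
  letI := heapGroup e
  show hp a b c = hp (hp a e (hp e b e)) e c
  rw [← hassoc a e e b e, hidr, hassoc, hidl]

theorem stmt10_aux {K : Type u} [CommRing K] {A : Type v} [AffMod K A] (e : A)
    (mul : A → A → A)
    (hassocm : ∀ a b c : A, mul (mul a b) c = mul a (mul b c))
    (hl : ∀ b : A, IsAffHom K (fun a => mul a b))
    (hr : ∀ a : A, IsAffHom K (mul a)) :
    IsLieBracket K (fun a b => hp (mul a b) (mul b a) b) := by
  letI := heapGroup e
  have hpg : ∀ a b c : A, hp a b c = a - b + c := hp_eq_group e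
  have hl1 : ∀ w a b c : A, mul (hp a b c) w = hp (mul a w) (mul b w) (mul c w) :=
    fun w => (hl w).1
  have hl2 : ∀ (w : A) (α : K) (a b : A),
      mul (act α a b) w = act α (mul a w) (mul b w) := fun w => (hl w).2
  have hr2 : ∀ (w : A) (α : K) (a b : A),
      mul w (act α a b) = act α (mul w a) (mul w b) := fun w => (hr w).2
  have ml : ∀ x y z w : A, mul (x - y + z) w = mul x w - mul y w + mul z w := by
    intro x y z w
    rw [← hpg x y z, hl1, hpg]
  have mr : ∀ w x y z : A, mul w (x - y + z) = mul w x - mul w y + mul w z := by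
    intro w x y z
    rw [← hpg x y z, (hr w).1, hpg]
  have sadd : ∀ (α : K) (x y z : A),
      act α e (x - y + z) = act α e x - act α e y + act α e z := by
    intro α x y z
    rw [← hpg x y z, act_hp, hpg]
  have abase : ∀ (α : K) (a b : A), act α a b = act α e b - act α e a + a := by
    intro α a b
    rw [act_base α a b e, hpg]
  refine ⟨fun b => ⟨fun a a' a'' => ?_, fun α a a' => ?_⟩,
         fun a => ⟨fun x y z => ?_, fun α x y => ?_⟩,
         fun a b => ?_, fun a b c => ?_⟩
  · simp only [hpg, ml, mr]
    abel
  · simp only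
    rw [hl2 b, hr2 b,
        abase α (mul a b) (mul a' b), abase α (mul b a) (mul b a'),
        abase α (hp (mul a b) (mul b a) b) (hp (mul a' b) (mul b a') b)]
    simp only [hpg, sadd, ml, mr]
    abel
  · simp only [hpg, ml, mr]
    abel
  · simp only
    rw [hr2 a, hl2 a,
        abase α (mul a x) (mul a y), abase α (mul x a) (mul y a), abase α x y,
        abase α (hp (mul a x) (mul x a) x) (hp (mul a y) (mul y a) y)]
    simp only [hpg, sadd, ml, mr]
    abel
  · simp only [hpg, ml, mr]
    abel
  · simp only [hpg, ml, mr, hassocm]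
    abel

/-- In an associative `K`-affgebra, the commutator-type bracket `[a,b] = ⟨ab,ba,b⟩`
is a left Lie bracket. -/
theorem stmt10 {K : Type u} [CommRing K] {A : Type v} [AffMod K A]
    (mul : A → A → A)
    (hassocm : ∀ a b c : A, mul (mul a b) c = mul a (mul b c))
    (hl : ∀ b : A, IsAffHom K (fun a => mul a b))
    (hr : ∀ a : A, IsAffHom K (mul a)) :
    IsLieBracket K (fun a b => hp (mul a b) (mul b a) b) := by
  refine ⟨fun b => (stmt10_aux b mul hassocm hl hr).1 b,
          fun a => (stmt10_aux a mul hassocm hl hr).2.1 a,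
          fun a b => (stmt10_aux a mul hassocm hl hr).2.2.1 a b,
          fun a b c => (stmt10_aux a mul hassocm hl hr).2.2.2 a b c⟩
end

section
/- Let (A, ·) be a right pre-Lie affgebra, i.e., an affine K-module with a bi-affine operation satisfying a·(b·c) = ⟨(a·b)·c, (a·c)·b, a·(c·b)⟩. Then [a,b] := ⟨a·b, b·a, b⟩ is a left Lie bracket on A. -/
universe u v

open AbHeap

open AffMod

/-- The abelian group obtained from an abelian heap by fixing a base point `e`. -/
def heapAG (A : Type v) [AbHeap A] (e : A) : AddCommGroup A := by
  letI : Zero A := ⟨e⟩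
  letI : Add A := ⟨fun a b => hp a e b⟩
  letI : Neg A := ⟨fun a => hp e a e⟩
  exact
    { add := (· + ·)
      add_assoc := fun a b c => hassoc a e b e c
      zero := e
      zero_add := fun a => hidl a e
      add_zero := fun a => hidr a e
      neg := (- ·)
      nsmul := nsmulRec
      zsmul := zsmulRec
      neg_add_cancel := fun a => by
        show hp (hp e a e) e a = e
        rw [hassoc, hidl, hidr]
      add_comm := fun a b => hcomm a e b }

/-- In a right pre-Lie affgebra, `[a,b] = ⟨a·b, b·a, b⟩` is a left Lie bracket. -/
theorem stmt11 {K : Type u} [CommRing K] {A : Type v} [AffMod K A]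
    (mul : A → A → A)
    (hpre : ∀ a b c : A,
      mul a (mul b c) = hp (mul (mul a b) c) (mul (mul a c) b) (mul a (mul c b)))
    (hl : ∀ b : A, IsAffHom K (fun a => mul a b))
    (hr : ∀ a : A, IsAffHom K (mul a)) :
    IsLieBracket K (fun a b => hp (mul a b) (mul b a) b) := by
  obtain h | he := isEmpty_or_nonempty A
  · exact ⟨fun b => h.elim b, fun a => h.elim a, fun a => h.elim a, fun a => h.elim a⟩
  obtain ⟨e⟩ := he
  letI G := heapAG A e
  have hps : ∀ a b c : A, hp a b c = a - b + c := by
    intro a b c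
    show hp a b c = hp (hp a e (hp e b e)) e c
    rw [hassoc a e (hp e b e) e c, hassoc e b e e c, hidl c e, ← hassoc a e e b c, hidr a e]
  have base : ∀ (α : K) (a b : A), act α a b = act α e b - act α e a + a := by
    intro α a b
    rw [← hps (act α e b) (act α e a) a]
    exact act_base α a b e
  have Tadd : ∀ (α : K) (x y z : A),
      act α e (x - y + z) = act α e x - act α e y + act α e z := by
    intro α x y z
    rw [show x - y + z = hp x y z from (hps x y z).symm, act_hp, hps]
  have acth2 : ∀ (α : K) (p q r p' q' r' : A),
      act α (p - q + r) (p' - q' + r')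
        = act α p p' - act α q q' + act α r r' := by
    intro α p q r p' q' r'
    rw [base α (p - q + r) (p' - q' + r'), Tadd, Tadd, base α p p', base α q q',
      base α r r']
    abel
  have act_selfE : ∀ (α : K) (b : A), act α b b = b := by
    intro α b; rw [base α b b]; abel
  have mulL : ∀ (x y z b : A), mul (x - y + z) b = mul x b - mul y b + mul z b := by
    intro x y z b
    rw [show x - y + z = hp x y z from (hps x y z).symm,
      show mul (hp x y z) b = hp (mul x b) (mul y b) (mul z b) from (hl b).1 x y z, hps]
  have mulR : ∀ (a x y z : A), mul a (x - y + z) = mul a x - mul a y + mul a z := by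
    intro a x y z
    rw [show x - y + z = hp x y z from (hps x y z).symm,
      show mul a (hp x y z) = hp (mul a x) (mul a y) (mul a z) from (hr a).1 x y z, hps]
  have mulLact : ∀ (α : K) (x y b : A), mul (act α x y) b = act α (mul x b) (mul y b) :=
    fun α x y b => (hl b).2 α x y
  have mulRact : ∀ (α : K) (a x y : A), mul a (act α x y) = act α (mul a x) (mul a y) :=
    fun α a x y => (hr a).2 α x y
  have hpre' : ∀ a b c : A,
      mul a (mul b c) = mul (mul a b) c - mul (mul a c) b + mul a (mul c b) := by
    intro a b c; rw [hpre a b c, hps]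
  refine ⟨fun b => ⟨?_, ?_⟩, fun a => ⟨?_, ?_⟩, ?_, ?_⟩
  · intro x y z
    simp only [hps, mulL, mulR]
    abel
  · intro α x y
    simp only [hps, mulLact, mulRact, acth2, act_selfE]
  · intro x y z
    simp only [hps, mulL, mulR]
    abel
  · intro α x y
    simp only [hps, mulLact, mulRact, acth2, act_selfE]
  · intro a b
    simp only [hps]
    abel
  · intro a b c
    simp only [hps, mulL, mulR]
    rw [hpre' a b c, hpre' b c a, hpre' c a b]
    abel
end

section
/- Let A be an affine K-module, o ∈ A, and regard A as an associative affgebra with multiplication ab := ⟨a,o,b⟩ (i.e., addition in A_o). Then an affine endomorphism X : A → A is a derivation along the identity (X(ab) = ⟨X(a)b, ab, aX(b)⟩) if and only if X is a K-module endomorphism of A_o (i.e., X is additive and K-linear with respect to the retract at o). -/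
universe u v

open AbHeap

open AffMod

/-- For the affgebra multiplication `ab = ⟨a,o,b⟩`, an affine endomorphism is a
derivation along the identity iff it is a `K`-module endomorphism of the retract `A_o`. -/
theorem stmt13 {K : Type u} [CommRing K] {A : Type v} [AffMod K A]
    (o : A) (X : A → A) (hX : IsAffHom K X) :
    (∀ a b : A, X (hp a o b) = hp (hp (X a) o b) (hp a o b) (hp a o (X b))) ↔
    ((∀ a b : A, X (hp a o b) = hp (X a) o (X b)) ∧ X o = o ∧
      ∀ (α : K) (a : A), X (act α o a) = act α o (X a)) := by
  obtain ⟨hXhp, hXact⟩ := hX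
  letI : Add A := ⟨fun a b => hp a o b⟩
  letI : Zero A := ⟨o⟩
  letI : Neg A := ⟨fun a => hp o a o⟩
  letI : AddGroup A :=
    AddGroup.ofLeftAxioms (fun a b c => hassoc a o b o c) (fun a => hidl a o)
      (fun a => by show hp (hp o a o) o a = o; rw [hassoc, hidl, hidr])
  letI : AddCommGroup A := { ‹AddGroup A› with add_comm := fun a b => hcomm a o b }
  have hp_eq : ∀ a b c : A, hp a b c = a + (-b + c) := by
    intro a b c
    show hp a b c = hp a o (hp (hp o b o) o c)
    rw [hassoc, hidl, ← hassoc, hidr]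
  have ho0 : o = (0 : A) := rfl
  constructor
  · intro h
    have hXo : X o = o := by
      have h0 := h o o
      rw [hidl, hidr, hidl, hp_eq] at h0
      have h1 : -o + X o = 0 := left_eq_add.mp h0
      rw [ho0, neg_zero, zero_add] at h1
      rw [ho0]; exact h1
    refine ⟨?_, hXo, ?_⟩
    · intro a b
      rw [h a b]
      simp only [hp_eq, ho0]
      abel
    · intro α a
      rw [hXact α o a, hXo]
  · rintro ⟨hadd, hXo, -⟩
    intro a b
    rw [hadd a b]
    simp only [hp_eq, ho0]
    abel
end

section
/- Let L be a Lie affgebra whose bracket is idempotent ([a,a] = a for all a). Then for each a ∈ L, the map X_a : b ↦ [a,b] is a derivation along the identity for the bracket: X_a is affine and X_a([b,c]) = ⟨[X_a(b),c], [b,c], [b,X_a(c)]⟩ for all b,c ∈ L. -/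
universe u v

open AbHeap

open AffMod

/-- Type synonym turning an abelian heap with chosen origin `e` into an additive group. -/
structure HeapGrp (H : Type v) (e : H) where
  val : H

namespace HeapGrp

variable {H : Type v} [AbHeap H] {e : H}

instance : Zero (HeapGrp H e) := ⟨⟨e⟩⟩
instance : Add (HeapGrp H e) := ⟨fun x y => ⟨hp x.val e y.val⟩⟩
instance : Neg (HeapGrp H e) := ⟨fun x => ⟨hp e x.val e⟩⟩

instance : AddCommGroup (HeapGrp H e) where
  add_assoc x y z := congrArg HeapGrp.mk (hassoc _ _ _ _ _)
  zero_add x := congrArg HeapGrp.mk (hidl _ _)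
  add_zero x := congrArg HeapGrp.mk (hidr _ _)
  add_comm x y := congrArg HeapGrp.mk (hcomm _ _ _)
  neg_add_cancel x := congrArg HeapGrp.mk
    (show hp (hp e x.val e) e x.val = e by rw [hassoc, hidl, hidr])
  nsmul := nsmulRec
  zsmul := zsmulRec

theorem hp_eq (x y z : H) :
    hp x y z = ((⟨x⟩ : HeapGrp H e) - ⟨y⟩ + ⟨z⟩).val := by
  show hp x y z = hp (hp x e (hp e y e)) e z
  rw [← hassoc, hidr, hassoc, hidl]

end HeapGrp

/-- In a Lie affgebra with idempotent bracket, each `X_a = [a,-]` is a derivation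
along the identity for the bracket. -/
theorem stmt14 {K : Type u} [CommRing K] {A : Type v} [AffMod K A]
    (br : A → A → A) (hbr : IsLieBracket K br) (hid : ∀ a : A, br a a = a) (a : A) :
    IsAffHom K (br a) ∧
    (∀ b c : A, br a (br b c) = hp (br (br a b) c) (br b c) (br b (br a c))) := by
  obtain ⟨_, haff, hanti, hjac⟩ := hbr
  refine ⟨haff a, fun b c => ?_⟩
  -- work in the additive group with origin `a`
  let m : A → HeapGrp A a := fun x => ⟨x⟩
  have toG : ∀ x y z w : A, hp x y z = w → m x - m y + m z = m w := by
    intro x y z w h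
    exact congrArg HeapGrp.mk ((HeapGrp.hp_eq x y z).symm.trans h)
  have fromG : ∀ x y z w : A, m x - m y + m z = m w → hp x y z = w := by
    intro x y z w h
    exact (HeapGrp.hp_eq x y z).trans (congrArg HeapGrp.val h)
  -- antisymmetry in group form (using idempotence)
  have anti : ∀ x y : A, m (br x y) - m x + m (br y x) = m y := by
    intro x y
    have h := hanti x y
    rw [hid x, hid y] at h
    exact toG _ _ _ _ h
  -- Jacobi in group form
  have jac : (m (br a (br b c)) - m a + m (br b (br c a))) - m b + m (br c (br a b))
      = m c := by
    have h := hjac a b c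
    rw [hid a, hid b, hid c] at h
    have h1 := toG _ _ _ _ h
    have h2 := toG (br a (br b c)) a (br b (br c a)) _ rfl
    rw [← h2] at h1
    exact h1
  -- br c a = hp a (br a c) c
  have hca : br c a = hp a (br a c) c := by
    refine (fromG a (br a c) c (br c a) ?_).symm
    rw [← anti a c]; abel
  -- expand br b (br c a) by affinity of br b
  have hA2 : m (br b (br c a)) = m (br b a) - m (br b (br a c)) + m (br b c) := by
    have h : br b (br c a) = hp (br b a) (br b (br a c)) (br b c) := by
      rw [hca, (haff b).1]
    exact (congrArg m h).trans (toG _ _ _ _ rfl).symm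
  -- solved forms of antisymmetry
  have hA3 : m (br c (br a b)) = m (br a b) - m (br (br a b) c) + m c := by
    rw [← anti (br a b) c]; abel
  have hba : m (br b a) = m a - m (br a b) + m b := by
    rw [← anti a b]; abel
  -- solve Jacobi for the first term
  have hA1 : m (br a (br b c)) = m c - m (br c (br a b)) + m b
      - m (br b (br c a)) + m a := by
    rw [← jac]; abel
  refine (fromG (br (br a b) c) (br b c) (br b (br a c)) (br a (br b c)) ?_).symm
  rw [hA1, hA3, hA2, hba]
  abel
end

section
/- Let A be an associative K-affgebra with commutator Lie bracket [a,b] = ⟨ab,ba,b⟩, and o ∈ A. Endow A_o with the retract associative multiplication a ∙ b = ab - ao + o² - ob (operations in A_o). Then the linearised Lie bracket [a,b]_o = [a,b] - [a,o] + [o,o] - [o,b] equals the commutator a ∙ b - b ∙ a in the K-algebra (A_o, ∙). -/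
universe u v

open AbHeap

open AffMod

/-- The retract at `o` of a Lie affgebra bracket. -/
def retrBr {A : Type v} [AbHeap A] (br : A → A → A) (o : A) : A → A → A :=
  fun a b => hp (hp (br a b) (br a o) (br o o)) (br o b) o

/-- The retract at `o` of an affgebra multiplication:
`a ∙ b = ab - ao + o² - ob` in `A_o`. -/
def retrMul {A : Type v} [AbHeap A] (mul : A → A → A) (o : A) : A → A → A :=
  fun a b => hp (hp (mul a b) (mul a o) (mul o o)) (mul o b) o

/-- For the commutator bracket `[a,b] = ⟨ab,ba,b⟩` on an associative affgebra, the
retracted bracket `[a,b]_o` is the commutator `a ∙ b - b ∙ a` of the retracted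
multiplication. -/
theorem stmt17 {K : Type u} [CommRing K] {A : Type v} [AffMod K A]
    (mul : A → A → A)
    (hassocm : ∀ a b c : A, mul (mul a b) c = mul a (mul b c))
    (hl : ∀ b : A, IsAffHom K (fun a => mul a b))
    (hr : ∀ a : A, IsAffHom K (mul a)) (o : A) :
    ∀ a b : A,
      retrBr (fun a b => hp (mul a b) (mul b a) b) o a b =
        hp (retrMul mul o a b) (retrMul mul o b a) o := by
  intro a b
  letI : Add A := ⟨fun x y => hp x o y⟩
  letI : Zero A := ⟨o⟩
  letI : Neg A := ⟨fun x => hp o x o⟩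
  letI : AddCommGroup A :=
    { add := fun x y => hp x o y
      zero := o
      neg := fun x => hp o x o
      nsmul := nsmulRec
      zsmul := zsmulRec
      add_assoc := fun x y z => hassoc x o y o z
      zero_add := fun x => hidl x o
      add_zero := fun x => hidr x o
      add_comm := fun x y => hcomm x o y
      neg_add_cancel := fun x => by
        show hp (hp o x o) o x = o
        rw [hassoc, hidl, hidr] }
  have key : ∀ x y z : A, hp x y z = x - y + z := by
    intro x y z
    show hp x y z = hp (hp x o (hp o y o)) o z
    rw [← hassoc x o o y o, hidr, hassoc, hidl]
  simp only [retrBr, retrMul, key]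
  abel
end

section
/- Let A be an affine K-module with Lie bracket [a,b] = ζ ▷_a b for some ζ ∈ K, and let N : A → A be any affine K-module endomorphism. Then N is a Nijenhuis operator for this bracket, and the Nijenhuis bracket coincides with the original bracket: [a,b]_N := ⟨[N(a),b], N([a,b]), [a,N(b)]⟩ = [a,b], and [N(a),N(b)] = N([a,b]_N). -/
universe u v

open AbHeap

open AffMod

/-- For the bracket `[a,b] = ζ ▷_a b`, every affine endomorphism `N` is a Nijenhuis
operator and the Nijenhuis bracket coincides with the original bracket. -/
theorem stmt18 {K : Type u} [CommRing K] {A : Type v} [AffMod K A]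
    (ζ : K) (N : A → A) (hN : IsAffHom K N) :
    (∀ a b : A,
      hp (act ζ (N a) b) (N (act ζ a b)) (act ζ a (N b)) = act ζ a b) ∧
    (∀ a b : A,
      act ζ (N a) (N b) = N (hp (act ζ (N a) b) (N (act ζ a b)) (act ζ a (N b)))) := by
  obtain ⟨hNhp, hNact⟩ := hN
  have key : ∀ a b : A,
      hp (act ζ (N a) b) (N (act ζ a b)) (act ζ a (N b)) = act ζ a b := by
    intro a b
    rw [hNact, act_base ζ a (N b) (N a), ← hassoc, hidr, ← act_base]
  exact ⟨key, fun a b => by rw [key, hNact]⟩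
end
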